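/- arXiv:2603.27426 — 2 statements merged into one kernel-verified Lean document; each statement's English description precedes it below -/
import Mathlib

section
/- For all n ≥ 0, the bi-periodic Padovan matrices commute consecutively: M_{p_n} · M_{p_{n+1}} = M_{p_{n+1}} · M_{p_n}. -/
/-- The bi-periodic Padovan matrices. -/
def biPadovanMatrix (a b : ℝ) : ℕ → Matrix (Fin 3) (Fin 3) ℝ
  | 0 => 1
  | 1 => !![0, 1, 0; 0, 0, 1; 1, a, 0]
  | 2 => !![0, 0, 1; 1, a, 0; 0, 1, a]
  | (n + 3) => (if Even (n + 3) then a else b) • biPadovanMatrix a b (n + 1)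
      + biPadovanMatrix a b n

/-! Every `biPadovanMatrix a b n` is a polynomial in `biPadovanMatrix a b 1`, because
`M₂ = M₁²` and the recurrence only takes scalar multiples and sums; polynomials in a
single matrix commute with each other. -/

namespace biPadovanMatrix

variable (a b : ℝ)

lemma two_eq_one_sq : biPadovanMatrix a b 2 = biPadovanMatrix a b 1 ^ 2 := by
  ext i j
  fin_cases i <;> fin_cases j <;>
    simp [biPadovanMatrix, sq, Matrix.mul_apply, Fin.sum_univ_succ]

lemma mem_adjoin_one : ∀ n, biPadovanMatrix a b n ∈ Algebra.adjoin ℝ {biPadovanMatrix a b 1}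
  | 0 => Subalgebra.one_mem _
  | 1 => Algebra.self_mem_adjoin_singleton ℝ _
  | 2 => two_eq_one_sq a b ▸ Subalgebra.pow_mem _ (Algebra.self_mem_adjoin_singleton ℝ _) 2
  | n + 3 =>
      Subalgebra.add_mem _ (Subalgebra.smul_mem _ (mem_adjoin_one (n + 1)) _) (mem_adjoin_one n)

lemma commute (m n : ℕ) : Commute (biPadovanMatrix a b m) (biPadovanMatrix a b n) :=
  Algebra.commute_of_mem_adjoin_singleton_of_commute (mem_adjoin_one a b n)
    (Algebra.commute_of_mem_adjoin_self (mem_adjoin_one a b m)).symm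

end biPadovanMatrix

theorem stmt_0_general (a b : ℝ) (n : ℕ) :
    biPadovanMatrix a b n * biPadovanMatrix a b (n + 1)
      = biPadovanMatrix a b (n + 1) * biPadovanMatrix a b n :=
  biPadovanMatrix.commute a b n (n + 1)

theorem stmt_0 (a b : ℝ) (ha : a ≠ 0) (hb : b ≠ 0) (n : ℕ) :
    biPadovanMatrix a b n * biPadovanMatrix a b (n + 1)
      = biPadovanMatrix a b (n + 1) * biPadovanMatrix a b n :=
  stmt_0_general a b n
end

section
/- Let a = 2 and M_{p_1} = [[0,1,0],[0,0,1],[1,2,0]]. Then for every positive integer n, the trace of M_{p_1}ⁿ equals L_n + (-1)ⁿ, where L_n is the n-th Lucas number. -/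
/-- The Lucas numbers. -/
def lucas : ℕ → ℕ
  | 0 => 2
  | 1 => 1
  | (n + 2) => lucas (n + 1) + lucas n

/-!
The characteristic polynomial of `M_{p_1}` is `X³ - 2X - 1 = (X + 1)(X² - X - 1)`, so by
Cayley–Hamilton the traces `Tr (M_{p_1}ⁿ)` satisfy `u (n + 3) = 2 u (n + 1) + u n`. The roots of
`X² - X - 1` make `L_n` a solution of the same recurrence, and the root `-1` makes `(-1)ⁿ` one.
Both sides agree for `n = 0, 1, 2`, and a solution of a recurrence of order three is determined by
its first three terms.
-/

open Matrix

/-- Coefficients listed from `u n` upwards: `u (n + 3) = 1 • u n + 2 • u (n + 1) + 0 • u (n + 2)`. -/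
def cubicRecurrence : LinearRecurrence ℝ := ⟨3, ![1, 2, 0]⟩

lemma cubicRecurrence_isSolution_iff (u : ℕ → ℝ) :
    cubicRecurrence.IsSolution u ↔ ∀ n, u (n + 3) = 2 * u (n + 1) + u n := by
  change (∀ n, u (n + 3) = ∑ i : Fin 3, ![(1 : ℝ), 2, 0] i * u (n + i)) ↔ _
  simp [Fin.sum_univ_three, add_comm, mul_comm]

lemma lucas_add_three (n : ℕ) : lucas (n + 3) = 2 * lucas (n + 1) + lucas n := by
  rw [lucas, lucas]
  ring

lemma pow_add_three_of_pow_three {R : Type*} [Ring R] {a : R} (ha : a ^ 3 = 2 * a + 1) (n : ℕ) :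
    a ^ (n + 3) = 2 * a ^ (n + 1) + a ^ n := by
  rw [pow_add, ha, mul_add, mul_one, ← mul_assoc, (Commute.ofNat_right (a ^ n) 2).eq, mul_assoc,
    ← pow_succ]

abbrev Mp1 : Matrix (Fin 3) (Fin 3) ℝ := !![0, 1, 0; 0, 0, 1; 1, 2, 0]

lemma Mp1_pow_three : Mp1 ^ 3 = 2 * Mp1 + 1 := by
  rw [two_mul]
  ext i j
  fin_cases i <;> fin_cases j <;> simp [pow_succ, Matrix.mul_apply, Fin.sum_univ_three] <;> norm_num

lemma isSolution_trace_Mp1_pow : cubicRecurrence.IsSolution fun n => trace (Mp1 ^ n) := by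
  rw [cubicRecurrence_isSolution_iff]
  intro n
  rw [pow_add_three_of_pow_three Mp1_pow_three, trace_add, two_mul, trace_add, two_mul]

lemma isSolution_lucas_add_neg_one_pow :
    cubicRecurrence.IsSolution fun n => (lucas n : ℝ) + (-1) ^ n := by
  rw [cubicRecurrence_isSolution_iff]
  intro n
  rw [lucas_add_three]
  push_cast
  ring

theorem stmt_6_general (n : ℕ) :
    Matrix.trace ((!![0, 1, 0; 0, 0, 1; 1, 2, 0] : Matrix (Fin 3) (Fin 3) ℝ) ^ n)
      = (lucas n : ℝ) + (-1) ^ n := by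
  have initial : Set.EqOn (fun n => trace (Mp1 ^ n)) (fun n => (lucas n : ℝ) + (-1) ^ n)
      (Finset.range 3) := by
    intro k hk
    obtain rfl | rfl | rfl : k = 0 ∨ k = 1 ∨ k = 2 := by simp at hk; omega
    all_goals simp [lucas, pow_two, trace_fin_three]
    all_goals norm_num
  exact congrFun ((cubicRecurrence.eq_iff_eqOn_range_order _ _ isSolution_trace_Mp1_pow
    isSolution_lucas_add_neg_one_pow).mpr initial) n

theorem stmt_6 (n : ℕ) (hn : 0 < n) :
    Matrix.trace ((!![0, 1, 0; 0, 0, 1; 1, 2, 0] : Matrix (Fin 3) (Fin 3) ℝ) ^ n)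
      = (lucas n : ℝ) + (-1) ^ n :=
  stmt_6_general n
end
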